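/- arXiv:2506.12287 — 6 statements merged into one kernel-verified Lean document; each statement's English description precedes it below -/
import Mathlib

section
/- Let P be a finite set of n points, let A be a set of centers achieving clustering cost Σ_{p∈P} d(A,p) ≤ β·OPT, and let R = (Σ_{p∈P} d(A,p))/(β n). Partition each cluster P_i into rings P_{i,j} where P_{i,0} = P_i ∩ B(c_i, R) and P_{i,j} = P_i ∩ [B(c_i, (2C₀)^j R) \ B(c_i, (2C₀)^{j−1} R)] for j ≥ 1, with C₀ ≥ 1. Then Σ_{i,j} |P_{i,j}| · (2C₀)^j R ≤ 3 C₀ β · OPT. -/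
/-- Ring decomposition bound: `J p` is the ring index of point `p` (around its assigned
center `a p` from the β-approximate center set `A`), and the weighted sum of ring radii
is at most `3 C₀ β OPT`. -/
theorem ring_radius_sum_bound {X : Type*} [MetricSpace X]
    (P A : Finset X) (hA : A.Nonempty) (hP : P.Nonempty)
    (k : ℕ) (hk : A.card = k)
    (β C₀ OPT R : ℝ) (hβ : 1 ≤ β) (hC₀ : 1 ≤ C₀) (hOPT0 : 0 ≤ OPT)
    (a : X → X)
    (ha : ∀ p ∈ P, a p ∈ A ∧ dist (a p) p = Metric.infDist p (↑A : Set X))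
    (hOPTopt : ∀ C : Finset X, C.card = k → C.Nonempty →
        OPT ≤ ∑ p ∈ P, Metric.infDist p (↑C : Set X))
    (hcost : ∑ p ∈ P, dist (a p) p ≤ β * OPT)
    (hR : R = (∑ p ∈ P, dist (a p) p) / (β * (P.card : ℝ)))
    (J : X → ℕ)
    (hJ0 : ∀ p ∈ P, J p = 0 → dist (a p) p ≤ R)
    (hJ : ∀ p ∈ P, ∀ j : ℕ, J p = j + 1 →
        (2 * C₀) ^ j * R < dist (a p) p ∧ dist (a p) p ≤ (2 * C₀) ^ (j + 1) * R) :
    ∑ p ∈ P, (2 * C₀) ^ (J p) * R ≤ 3 * C₀ * β * OPT := by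
  have hβ0 : (0:ℝ) < β := by linarith
  have hC0 : (0:ℝ) < C₀ := by linarith
  set S := ∑ p ∈ P, dist (a p) p with hSdef
  have hS0 : 0 ≤ S := Finset.sum_nonneg fun p _ => dist_nonneg
  have hn0 : (0:ℝ) < (P.card : ℝ) := by exact_mod_cast Finset.card_pos.mpr hP
  have hR0 : 0 ≤ R := by rw [hR]; positivity
  have key : ∀ p ∈ P, (2 * C₀) ^ (J p) * R ≤ R + 2 * C₀ * dist (a p) p := by
    intro p hp
    have hd : 0 ≤ dist (a p) p := dist_nonneg
    cases h : J p with
    | zero => simp only [pow_zero, one_mul]; nlinarith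
    | succ j =>
        obtain ⟨h1, _⟩ := hJ p hp j h
        have heq : (2 * C₀) ^ (j + 1) * R = 2 * C₀ * ((2 * C₀) ^ j * R) := by ring
        have h2 : 2 * C₀ * ((2 * C₀) ^ j * R) ≤ 2 * C₀ * dist (a p) p :=
          mul_le_mul_of_nonneg_left h1.le (by linarith)
        rw [heq]; linarith
  have hsum : ∑ p ∈ P, (2 * C₀) ^ (J p) * R ≤ (P.card : ℝ) * R + 2 * C₀ * S := by
    calc ∑ p ∈ P, (2 * C₀) ^ (J p) * R
        ≤ ∑ p ∈ P, (R + 2 * C₀ * dist (a p) p) := Finset.sum_le_sum key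
      _ = (P.card : ℝ) * R + 2 * C₀ * S := by
          rw [Finset.sum_add_distrib, Finset.sum_const, ← Finset.mul_sum]
          simp [nsmul_eq_mul, hSdef]
  have hnR : (P.card : ℝ) * R = S / β := by
    rw [hR]; field_simp
  have h1 : (P.card : ℝ) * R ≤ OPT := by
    rw [hnR]; rw [div_le_iff₀ hβ0]; linarith
  have h2 : 2 * C₀ * S ≤ 2 * C₀ * (β * OPT) :=
    mul_le_mul_of_nonneg_left hcost (by linarith)
  nlinarith [mul_nonneg (mul_nonneg hC0.le hβ0.le) hOPT0]
end

section
/- Let C be any finite set of centers in a metric space, z ≥ 1, and let P and Q be finite point sets such that |Q| ≤ η·|P| and for all x ∈ Q, y ∈ P one has d(x,y)^z ≤ (2C₀)^z · diam(Q)^z. Then Σ_{x∈Q} d(C,x)^z ≤ 2^z·η·Σ_{y∈P} d(C,y)^z + (2C₀)^{2z}·|Q|·diam(Q)^z. -/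
private lemma rpow_add_le {a b z : ℝ} (ha : 0 ≤ a) (hb : 0 ≤ b) (hz : 1 ≤ z) :
    (a + b) ^ z ≤ 2 ^ z * (a ^ z + b ^ z) := by
  have hz0 : (0:ℝ) ≤ z := le_trans zero_le_one hz
  have h1 : a + b ≤ 2 * max a b := by
    rcases le_total a b with h | h
    · simp [max_eq_right h]; nlinarith
    · simp [max_eq_left h]; nlinarith
  have h2 : (a + b) ^ z ≤ (2 * max a b) ^ z :=
    Real.rpow_le_rpow (by positivity) h1 hz0
  have h3 : (2 * max a b) ^ z = 2 ^ z * (max a b) ^ z :=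
    Real.mul_rpow (by norm_num) (le_max_of_le_left ha)
  have h4 : (max a b) ^ z ≤ a ^ z + b ^ z := by
    rcases le_total a b with h | h
    · rw [max_eq_right h]
      nlinarith [Real.rpow_nonneg ha z]
    · rw [max_eq_left h]
      nlinarith [Real.rpow_nonneg hb z]
  calc (a + b) ^ z ≤ 2 ^ z * (max a b) ^ z := by rw [← h3]; exact h2
    _ ≤ 2 ^ z * (a ^ z + b ^ z) := by
        have : (0:ℝ) ≤ 2 ^ z := Real.rpow_nonneg (by norm_num) z
        nlinarith

/-- The (k,z) version of the heavy/light ring cost comparison, using the generalized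
triangle inequality. Here `z ≥ 1` is a real exponent and powers are real powers. -/
theorem light_ring_cost_bound_kz {X : Type*} [MetricSpace X]
    (C P Q : Finset X) (hC : C.Nonempty)
    (C₀ η z : ℝ) (hC₀ : 1 ≤ C₀) (hη : 0 < η) (hz : 1 ≤ z)
    (hsize : (Q.card : ℝ) ≤ η * (P.card : ℝ))
    (hclose : ∀ x ∈ Q, ∀ y ∈ P,
        dist x y ^ z ≤ (2 * C₀) ^ z * Metric.diam (↑Q : Set X) ^ z) :
    ∑ x ∈ Q, Metric.infDist x (↑C : Set X) ^ z ≤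
      2 ^ z * η * ∑ y ∈ P, Metric.infDist y (↑C : Set X) ^ z
        + (2 * C₀) ^ (2 * z) * (Q.card : ℝ) * Metric.diam (↑Q : Set X) ^ z := by
  have hz0 : (0:ℝ) ≤ z := le_trans zero_le_one hz
  set D := Metric.diam (↑Q : Set X) with hD
  set f : X → ℝ := fun x => Metric.infDist x (↑C : Set X) ^ z with hf
  have hfnn : ∀ x, 0 ≤ f x := fun x =>
    Real.rpow_nonneg Metric.infDist_nonneg z
  have hSQnn : 0 ≤ ∑ x ∈ Q, f x := Finset.sum_nonneg fun x _ => hfnn x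
  have hSPnn : 0 ≤ ∑ y ∈ P, f y := Finset.sum_nonneg fun y _ => hfnn y
  have hDnn : 0 ≤ D := Metric.diam_nonneg
  have hDz : 0 ≤ D ^ z := Real.rpow_nonneg hDnn z
  have h2z : (0:ℝ) < 2 ^ z := Real.rpow_pos_of_pos (by norm_num) z
  have hCz : (0:ℝ) ≤ (2 * C₀) ^ z := Real.rpow_nonneg (by linarith) z
  -- key pointwise bound
  have key : ∀ x ∈ Q, ∀ y ∈ P,
      f x ≤ 2 ^ z * f y + 2 ^ z * ((2 * C₀) ^ z * D ^ z) := by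
    intro x hx y hy
    have htri : Metric.infDist x (↑C : Set X) ≤
        Metric.infDist y (↑C : Set X) + dist x y :=
      Metric.infDist_le_infDist_add_dist
    have h1 : f x ≤ (Metric.infDist y (↑C : Set X) + dist x y) ^ z :=
      Real.rpow_le_rpow Metric.infDist_nonneg htri hz0
    have h2 := rpow_add_le (Metric.infDist_nonneg (x := y) (s := (↑C : Set X)))
      (dist_nonneg (x := x) (y := y)) hz
    have h3 := hclose x hx y hy
    calc f x ≤ 2 ^ z * (f y + dist x y ^ z) := le_trans h1 h2
      _ ≤ 2 ^ z * f y + 2 ^ z * ((2 * C₀) ^ z * D ^ z) := by nlinarith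
  -- 2^z * (2C₀)^z ≤ (2C₀)^(2z)
  have hpow : 2 ^ z * (2 * C₀) ^ z ≤ (2 * C₀) ^ (2 * z) := by
    have h1 : (2 * C₀) ^ (2 * z) = (2 * C₀) ^ z * (2 * C₀) ^ z := by
      rw [← Real.rpow_add (by linarith : (0:ℝ) < 2 * C₀)]; ring_nf
    have h2 : (2:ℝ) ^ z ≤ (2 * C₀) ^ z :=
      Real.rpow_le_rpow (by norm_num) (by linarith) hz0
    rw [h1]
    exact mul_le_mul_of_nonneg_right h2 hCz
  rcases P.eq_empty_or_nonempty with hP | hP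
  · -- then Q is empty
    have : (Q.card : ℝ) ≤ 0 := by simpa [hP] using hsize
    have hQ : Q = ∅ := by
      have := Nat.cast_nonneg (α := ℝ) Q.card
      have : Q.card = 0 := by exact_mod_cast le_antisymm ‹(Q.card:ℝ) ≤ 0› this
      exact Finset.card_eq_zero.mp this
    subst hQ
    simp
    positivity
  · have hPpos : (0:ℝ) < P.card := by exact_mod_cast Finset.card_pos.mpr hP
    -- sum over P of key bound, for each x
    have step : ∀ x ∈ Q, (P.card : ℝ) * f x ≤
        2 ^ z * ∑ y ∈ P, f y + (P.card : ℝ) * (2 ^ z * ((2 * C₀) ^ z * D ^ z)) := by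
      intro x hx
      have := Finset.sum_le_sum (fun y hy => key x hx y hy)
      simpa [Finset.sum_add_distrib, Finset.mul_sum, mul_comm, mul_left_comm,
        Finset.sum_const, nsmul_eq_mul] using this
    have total : (P.card : ℝ) * ∑ x ∈ Q, f x ≤
        (Q.card : ℝ) * (2 ^ z * ∑ y ∈ P, f y)
          + (Q.card : ℝ) * ((P.card : ℝ) * (2 ^ z * ((2 * C₀) ^ z * D ^ z))) := by
      calc (P.card : ℝ) * ∑ x ∈ Q, f x = ∑ x ∈ Q, (P.card : ℝ) * f x := by
            rw [Finset.mul_sum]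
        _ ≤ ∑ _x ∈ Q, (2 ^ z * ∑ y ∈ P, f y
              + (P.card : ℝ) * (2 ^ z * ((2 * C₀) ^ z * D ^ z))) :=
            Finset.sum_le_sum step
        _ = (Q.card : ℝ) * (2 ^ z * ∑ y ∈ P, f y)
              + (Q.card : ℝ) * ((P.card : ℝ) * (2 ^ z * ((2 * C₀) ^ z * D ^ z))) := by
            rw [Finset.sum_const, nsmul_eq_mul]; ring
    -- divide by |P|
    have hQcard : (0:ℝ) ≤ (Q.card : ℝ) := Nat.cast_nonneg _
    have goal' : ∑ x ∈ Q, f x ≤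
        2 ^ z * η * ∑ y ∈ P, f y
          + (Q.card : ℝ) * (2 ^ z * ((2 * C₀) ^ z * D ^ z)) := by
      have h1 : (Q.card : ℝ) * (2 ^ z * ∑ y ∈ P, f y) ≤
          η * (P.card : ℝ) * (2 ^ z * ∑ y ∈ P, f y) :=
        mul_le_mul_of_nonneg_right hsize (by positivity)
      have h2 : (P.card : ℝ) * ∑ x ∈ Q, f x ≤
          (P.card : ℝ) * (2 ^ z * η * ∑ y ∈ P, f y
            + (Q.card : ℝ) * (2 ^ z * ((2 * C₀) ^ z * D ^ z))) := by
        nlinarith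
      exact le_of_mul_le_mul_left (by linarith [h2]) hPpos
    refine le_trans goal' ?_
    have : (Q.card : ℝ) * (2 ^ z * ((2 * C₀) ^ z * D ^ z)) ≤
        (2 * C₀) ^ (2 * z) * (Q.card : ℝ) * D ^ z := by
      have := mul_le_mul_of_nonneg_right hpow hDz
      nlinarith
    linarith
end

section
/- Suppose for every ring P_{i,ℓ} in a family 𝒫^light there is an associated ring P_{i,j*(ℓ)} ∈ 𝒫^heavy such that: (a) Σ_{x∈P_{i,ℓ}} d(C,x) ≤ (ε/(2C₀))·Σ_{y∈P_{i,j*(ℓ)}} d(C,y) + 2C₀·|P_{i,ℓ}|·diam(P_{i,ℓ}), (b) |P_{i,ℓ}|·diam(P_{i,ℓ}) ≤ ε·C₀·|P_{i,j*(ℓ)}|·diam(P_{i,j*(ℓ)}), and (c) each heavy ring is the image j*(ℓ) of at most log n light rings. Then Σ_{P∈𝒫^light} cost(C,P) ≤ ε·2C₀²·log n · Σ_{P∈𝒫^heavy} (cost(C,P) + |P|·diam(P)). -/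
/-- Total cost of the light rings is bounded in terms of the heavy rings:
each light ring `ℓ` charges the heavy ring `φ ℓ`, each heavy ring is charged by at
most `log n` light rings. -/
theorem light_rings_total_cost {X ιL ιH : Type*} [MetricSpace X] [Fintype ιL] [Fintype ιH]
    (C : Finset X) (hC : C.Nonempty)
    (Plight : ιL → Finset X) (Pheavy : ιH → Finset X) (φ : ιL → ιH)
    (C₀ ε : ℝ) (n : ℕ) (hC₀ : 1 ≤ C₀) (hε0 : 0 < ε) (hε1 : ε < 1) (hn : 2 ≤ n)
    (ha : ∀ ℓ : ιL, ∑ x ∈ Plight ℓ, Metric.infDist x (↑C : Set X) ≤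
        (ε / (2 * C₀)) * ∑ y ∈ Pheavy (φ ℓ), Metric.infDist y (↑C : Set X)
          + 2 * C₀ * ((Plight ℓ).card : ℝ) * Metric.diam (↑(Plight ℓ) : Set X))
    (hb : ∀ ℓ : ιL, ((Plight ℓ).card : ℝ) * Metric.diam (↑(Plight ℓ) : Set X) ≤
        ε * C₀ * ((Pheavy (φ ℓ)).card : ℝ) * Metric.diam (↑(Pheavy (φ ℓ)) : Set X))
    (hc : ∀ h : ιH, (Nat.card {ℓ : ιL // φ ℓ = h} : ℝ) ≤ Real.log n) :
    ∑ ℓ : ιL, ∑ x ∈ Plight ℓ, Metric.infDist x (↑C : Set X) ≤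
      ε * 2 * C₀ ^ 2 * Real.log n *
        ∑ h : ιH, ((∑ x ∈ Pheavy h, Metric.infDist x (↑C : Set X))
          + ((Pheavy h).card : ℝ) * Metric.diam (↑(Pheavy h) : Set X)) := by
  classical
  have hC₀0 : (0:ℝ) < C₀ := lt_of_lt_of_le one_pos hC₀
  set f : ιH → ℝ := fun h => (∑ x ∈ Pheavy h, Metric.infDist x (↑C : Set X))
      + ((Pheavy h).card : ℝ) * Metric.diam (↑(Pheavy h) : Set X) with hf
  have hcost : ∀ h : ιH, 0 ≤ ∑ x ∈ Pheavy h, Metric.infDist x (↑C : Set X) := by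
    intro h
    exact Finset.sum_nonneg fun x _ => Metric.infDist_nonneg
  have hf0 : ∀ h : ιH, 0 ≤ f h := by
    intro h
    have := hcost h
    have : (0:ℝ) ≤ ((Pheavy h).card : ℝ) * Metric.diam (↑(Pheavy h) : Set X) :=
      mul_nonneg (Nat.cast_nonneg _) Metric.diam_nonneg
    positivity
  -- per-light-ring bound
  have key : ∀ ℓ : ιL, ∑ x ∈ Plight ℓ, Metric.infDist x (↑C : Set X) ≤
      ε * 2 * C₀ ^ 2 * f (φ ℓ) := by
    intro ℓ
    have h1 := ha ℓ
    have h2 := hb ℓ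
    have hcase : ε / (2 * C₀) ≤ ε * 2 * C₀ ^ 2 := by
      rw [div_le_iff₀ (by positivity)]
      have h3 : (1:ℝ) ≤ C₀ ^ 3 := one_le_pow₀ hC₀
      nlinarith
    calc ∑ x ∈ Plight ℓ, Metric.infDist x (↑C : Set X)
        ≤ (ε / (2 * C₀)) * ∑ y ∈ Pheavy (φ ℓ), Metric.infDist y (↑C : Set X)
          + 2 * C₀ * ((Plight ℓ).card : ℝ) * Metric.diam (↑(Plight ℓ) : Set X) := h1
      _ ≤ (ε * 2 * C₀ ^ 2) * ∑ y ∈ Pheavy (φ ℓ), Metric.infDist y (↑C : Set X)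
          + (ε * 2 * C₀ ^ 2) * (((Pheavy (φ ℓ)).card : ℝ)
              * Metric.diam (↑(Pheavy (φ ℓ)) : Set X)) := by
          gcongr ?_ + ?_
          · exact mul_le_mul_of_nonneg_right hcase (hcost _)
          · calc 2 * C₀ * ((Plight ℓ).card : ℝ) * Metric.diam (↑(Plight ℓ) : Set X)
                = 2 * C₀ * (((Plight ℓ).card : ℝ) * Metric.diam (↑(Plight ℓ) : Set X)) := by
                  ring
              _ ≤ 2 * C₀ * (ε * C₀ * ((Pheavy (φ ℓ)).card : ℝ)
                    * Metric.diam (↑(Pheavy (φ ℓ)) : Set X)) := by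
                  apply mul_le_mul_of_nonneg_left _ (by positivity)
                  calc ((Plight ℓ).card : ℝ) * Metric.diam (↑(Plight ℓ) : Set X)
                      ≤ ε * C₀ * ((Pheavy (φ ℓ)).card : ℝ)
                          * Metric.diam (↑(Pheavy (φ ℓ)) : Set X) := h2
                    _ = ε * C₀ * ((Pheavy (φ ℓ)).card : ℝ)
                          * Metric.diam (↑(Pheavy (φ ℓ)) : Set X) := rfl
              _ = (ε * 2 * C₀ ^ 2) * (((Pheavy (φ ℓ)).card : ℝ)
                    * Metric.diam (↑(Pheavy (φ ℓ)) : Set X)) := by ring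
      _ = ε * 2 * C₀ ^ 2 * f (φ ℓ) := by rw [hf]; ring
  -- fiberwise bound
  have fiber : ∑ ℓ : ιL, f (φ ℓ) ≤ Real.log n * ∑ h : ιH, f h := by
    rw [Finset.mul_sum]
    rw [← Finset.sum_fiberwise (g := φ) (f := fun ℓ => f (φ ℓ))]
    apply Finset.sum_le_sum
    intro h _
    have hcard : (Nat.card {ℓ : ιL // φ ℓ = h} : ℝ)
        = ((Finset.univ.filter fun ℓ => φ ℓ = h).card : ℝ) := by
      rw [Nat.card_eq_fintype_card, Fintype.card_subtype]
    calc ∑ ℓ ∈ Finset.univ.filter (fun ℓ => φ ℓ = h), f (φ ℓ)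
        = ∑ ℓ ∈ Finset.univ.filter (fun ℓ => φ ℓ = h), f h := by
          apply Finset.sum_congr rfl
          intro ℓ hℓ
          rw [(Finset.mem_filter.mp hℓ).2]
      _ = ((Finset.univ.filter fun ℓ => φ ℓ = h).card : ℝ) * f h := by
          rw [Finset.sum_const, nsmul_eq_mul]
      _ ≤ Real.log n * f h := by
          apply mul_le_mul_of_nonneg_right _ (hf0 h)
          rw [← hcard]; exact hc h
  calc ∑ ℓ : ιL, ∑ x ∈ Plight ℓ, Metric.infDist x (↑C : Set X)
      ≤ ∑ ℓ : ιL, ε * 2 * C₀ ^ 2 * f (φ ℓ) := Finset.sum_le_sum fun ℓ _ => key ℓ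
    _ = ε * 2 * C₀ ^ 2 * ∑ ℓ : ιL, f (φ ℓ) := by rw [← Finset.mul_sum]
    _ ≤ ε * 2 * C₀ ^ 2 * (Real.log n * ∑ h : ιH, f h) := by
        apply mul_le_mul_of_nonneg_left fiber (by positivity)
    _ = ε * 2 * C₀ ^ 2 * Real.log n * ∑ h : ιH, f h := by ring
end

section
/- Let T be a finite multiset of points, let FC(T) consist of m points sampled uniformly at random with replacement from T, each weighted |T|/m, and let cost(S, C, Γ) denote the minimum-cost fractional assignment of the weighted set S to centers C subject to capacity constraint Γ. Then for any fixed C and Γ with Γ(C) = |T|, cost(T, C, Γ) ≤ E[cost(FC(T), C, Γ)], where the expectation is over the random sample. -/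
open Finset

/-- The optimal cost of a fractional assignment of the weighted points `(pt i, w i)`
to the centers `C`, subject to the capacity constraint `Γ`. -/
noncomputable def assignCost {X : Type*} [MetricSpace X] {ι : Type*} [Fintype ι]
    (pt : ι → X) (w : ι → ℝ) (C : Finset X) (Γ : X → ℝ) : ℝ :=
  sInf { t : ℝ | ∃ σ : ι → X → ℝ, (∀ i c, 0 ≤ σ i c) ∧
    (∀ c ∈ C, ∑ i : ι, σ i c = Γ c) ∧ (∀ i : ι, ∑ c ∈ C, σ i c = w i) ∧
    t = ∑ i : ι, ∑ c ∈ C, σ i c * dist (pt i) c }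

lemma sum_eval {α : Type*} [Fintype α] [DecidableEq α] {m : ℕ} (i : Fin m) (g : α → ℝ) :
    ∑ f : Fin m → α, g (f i) = (Fintype.card α : ℝ) ^ (m - 1) * ∑ a : α, g a := by
  rw [← (Equiv.piSplitAt i (fun _ => α)).symm.sum_comp (fun f => g (f i))]
  simp [Equiv.piSplitAt_symm_apply, Fintype.sum_prod_type, mul_comm, Fintype.card_fun,
    ← Finset.sum_mul]

lemma sum_swap4 {α β γ δ : Type*} (s : Finset α) (t : Finset β) (u : Finset γ)
    (v : Finset δ) (g : α → β → γ → δ → ℝ) :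
    ∑ a ∈ s, ∑ b ∈ t, ∑ c ∈ u, ∑ d ∈ v, g a b c d =
      ∑ c ∈ u, ∑ d ∈ v, ∑ b ∈ t, ∑ a ∈ s, g a b c d :=
  calc ∑ a ∈ s, ∑ b ∈ t, ∑ c ∈ u, ∑ d ∈ v, g a b c d
      = ∑ b ∈ t, ∑ a ∈ s, ∑ c ∈ u, ∑ d ∈ v, g a b c d := Finset.sum_comm
    _ = ∑ b ∈ t, ∑ c ∈ u, ∑ a ∈ s, ∑ d ∈ v, g a b c d :=
        Finset.sum_congr rfl fun b _ => Finset.sum_comm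
    _ = ∑ b ∈ t, ∑ c ∈ u, ∑ d ∈ v, ∑ a ∈ s, g a b c d :=
        Finset.sum_congr rfl fun b _ => Finset.sum_congr rfl fun c _ => Finset.sum_comm
    _ = ∑ c ∈ u, ∑ b ∈ t, ∑ d ∈ v, ∑ a ∈ s, g a b c d := Finset.sum_comm
    _ = ∑ c ∈ u, ∑ d ∈ v, ∑ b ∈ t, ∑ a ∈ s, g a b c d :=
        Finset.sum_congr rfl fun c _ => Finset.sum_comm

lemma cost_set_bddBelow {X : Type*} [MetricSpace X] {ι : Type*} [Fintype ι]
    (pt : ι → X) (w : ι → ℝ) (C : Finset X) (Γ : X → ℝ) :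
    BddBelow { t : ℝ | ∃ σ : ι → X → ℝ, (∀ i c, 0 ≤ σ i c) ∧
    (∀ c ∈ C, ∑ i : ι, σ i c = Γ c) ∧ (∀ i : ι, ∑ c ∈ C, σ i c = w i) ∧
    t = ∑ i : ι, ∑ c ∈ C, σ i c * dist (pt i) c } := by
  refine ⟨0, fun t ht => ?_⟩
  obtain ⟨σ, h0, -, -, rfl⟩ := ht
  exact Finset.sum_nonneg fun i _ => Finset.sum_nonneg fun c _ =>
    mul_nonneg (h0 i c) dist_nonneg

lemma cost_set_nonempty {X : Type*} [MetricSpace X] {ι : Type*} [Fintype ι]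
    (pt : ι → X) (w : ι → ℝ) (C : Finset X) (Γ : X → ℝ)
    (hw : ∀ i, 0 ≤ w i) (hΓ0 : ∀ c ∈ C, 0 ≤ Γ c)
    (hsum : ∑ c ∈ C, Γ c = ∑ i : ι, w i) (hpos : 0 < ∑ i : ι, w i) :
    Set.Nonempty { t : ℝ | ∃ σ : ι → X → ℝ, (∀ i c, 0 ≤ σ i c) ∧
    (∀ c ∈ C, ∑ i : ι, σ i c = Γ c) ∧ (∀ i : ι, ∑ c ∈ C, σ i c = w i) ∧
    t = ∑ i : ι, ∑ c ∈ C, σ i c * dist (pt i) c } := by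
  classical
  set W : ℝ := ∑ i : ι, w i with hW
  refine ⟨_, fun i c => if c ∈ C then w i * Γ c / W else 0, ?_, ?_, ?_, rfl⟩
  · intro i c
    simp only
    split
    · next hc => exact div_nonneg (mul_nonneg (hw i) (hΓ0 c hc)) hpos.le
    · exact le_rfl
  · intro c hc
    simp only [if_pos hc, ← Finset.sum_div, ← Finset.sum_mul, ← hW]
    field_simp
  · intro i
    rw [Finset.sum_congr rfl (fun c hc => if_pos hc)]
    simp only [mul_div_assoc, ← Finset.mul_sum, ← Finset.sum_div, hsum, ← hW]
    field_simp

/-- `cost(T,C,Γ) ≤ E[cost(FC(T),C,Γ)]`, where `FC(T)` consists of `m` uniform samples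
from `T` (with replacement, encoded as a uniformly random tuple `f : Fin m → T`),
each weighted `|T|/m`, and the expectation is the average over all tuples. -/
theorem expected_coreset_cost_lower_bound {X : Type*} [MetricSpace X]
    (T C : Finset X) (hT : T.Nonempty) (hC : C.Nonempty)
    (Γ : X → ℝ) (hΓ0 : ∀ c ∈ C, 0 ≤ Γ c) (hΓ : ∑ c ∈ C, Γ c = (T.card : ℝ))
    (m : ℕ) (hm : 0 < m) :
    assignCost (fun x : {x // x ∈ T} => (x : X)) (fun _ => (1 : ℝ)) C Γ ≤
      (∑ f : Fin m → {x // x ∈ T},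
          assignCost (fun i : Fin m => ((f i : X))) (fun _ => (T.card : ℝ) / (m : ℝ)) C Γ)
        / (T.card : ℝ) ^ m := by
  classical
  set ι := {x // x ∈ T}
  set N : ℝ := (T.card : ℝ) with hN
  have hN0 : (0:ℝ) < N := by rw [hN]; exact_mod_cast Finset.card_pos.mpr hT
  set K : ℝ := N ^ m with hK
  have hK0 : (0:ℝ) < K := pow_pos hN0 m
  have hm0 : (m:ℝ) ≠ 0 := Nat.cast_ne_zero.mpr hm.ne'
  have hcard : (Fintype.card ι : ℝ) = N := by rw [Fintype.card_coe]
  have hcardF : ((Fintype.card (Fin m → ι) : ℕ) : ℝ) = K := by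
    rw [Fintype.card_fun, Fintype.card_fin]
    push_cast
    rw [hcard]
  refine le_of_forall_pos_le_add fun ε hε => ?_
  -- pick near-optimal assignments for each sample tuple `f`
  have hex : ∀ f : Fin m → ι, ∃ σ : Fin m → X → ℝ, (∀ i c, 0 ≤ σ i c) ∧
      (∀ c ∈ C, ∑ i, σ i c = Γ c) ∧ (∀ i, ∑ c ∈ C, σ i c = N / m) ∧
      (∑ i, ∑ c ∈ C, σ i c * dist (↑(f i) : X) c) <
        assignCost (fun i : Fin m => ((f i : X))) (fun _ => N / (m : ℝ)) C Γ + ε := by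
    intro f
    have hsum : ∑ c ∈ C, Γ c = ∑ _i : Fin m, N / m := by
      rw [hΓ, Finset.sum_const, Finset.card_univ, Fintype.card_fin, nsmul_eq_mul]
      field_simp
    have hpos : (0:ℝ) < ∑ _i : Fin m, N / m := by
      rw [← hsum, hΓ]; exact hN0
    have hne := cost_set_nonempty (fun i : Fin m => ((f i : X))) (fun _ => N / (m:ℝ)) C Γ
      (fun _ => by positivity) hΓ0 hsum hpos
    obtain ⟨t, ht, hlt⟩ := Real.lt_sInf_add_pos hne hε
    obtain ⟨σ, h0, h1, h2, rfl⟩ := ht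
    exact ⟨σ, h0, h1, h2, by simpa [assignCost] using hlt⟩
  choose σf hσ0 hσΓ hσw hσcost using hex
  -- the averaged assignment for T
  set τ : ι → X → ℝ := fun x c => ∑ f : Fin m → ι, ∑ i, if f i = x then σf f i c else 0
    with hτ
  have h1 : ∀ c ∈ C, ∑ x : ι, τ x c = K * Γ c := by
    intro c hc
    simp only [hτ]
    rw [Finset.sum_comm]
    calc ∑ f : Fin m → ι, ∑ x : ι, ∑ i : Fin m, (if f i = x then σf f i c else 0)
        = ∑ f : Fin m → ι, ∑ i : Fin m, ∑ x : ι, (if f i = x then σf f i c else 0) :=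
          Finset.sum_congr rfl fun f _ => Finset.sum_comm
      _ = ∑ _f : Fin m → ι, Γ c := by
          simp only [fun (f : Fin m → ι) (i : Fin m) =>
            Finset.sum_ite_eq Finset.univ (f i) (fun _ => σf f i c), Finset.mem_univ, if_true]
          exact Finset.sum_congr rfl fun f _ => hσΓ f c hc
      _ = K * Γ c := by
          rw [Finset.sum_const, Finset.card_univ, nsmul_eq_mul, hcardF]
  have h2 : ∀ x : ι, ∑ c ∈ C, τ x c = K := by
    intro x
    simp only [hτ]
    rw [Finset.sum_comm]
    calc ∑ f : Fin m → ι, ∑ c ∈ C, ∑ i : Fin m, (if f i = x then σf f i c else 0)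
        = ∑ f : Fin m → ι, ∑ i : Fin m, (if f i = x then N / m else 0) := by
          refine Finset.sum_congr rfl fun f _ => ?_
          rw [Finset.sum_comm]
          refine Finset.sum_congr rfl fun i _ => ?_
          by_cases h : f i = x
          · simp [h, hσw f i]
          · simp [h]
      _ = ∑ i : Fin m, ∑ f : Fin m → ι, (if f i = x then N / m else 0) := Finset.sum_comm
      _ = ∑ _i : Fin m, (Fintype.card ι : ℝ) ^ (m - 1) *
            ∑ a : ι, (if a = x then N / m else 0) :=
          Finset.sum_congr rfl fun i _ => sum_eval i (fun a : ι => if a = x then N / m else 0)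
      _ = K := by
          simp only [Finset.sum_ite_eq' Finset.univ x (fun _ => N / m), Finset.mem_univ, if_true, hcard,
            Finset.sum_const, Finset.card_univ, Fintype.card_fin, nsmul_eq_mul]
          rw [hK]
          field_simp
          rw [← pow_succ, Nat.sub_add_cancel hm]
  have h3 : ∑ x : ι, ∑ c ∈ C, τ x c * dist (x : X) c =
      ∑ f : Fin m → ι, ∑ i, ∑ c ∈ C, σf f i c * dist (↑(f i) : X) c := by
    simp only [hτ, Finset.sum_mul, ite_mul, zero_mul]
    rw [sum_swap4 Finset.univ C Finset.univ Finset.univ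
      (fun (x : ι) (c : X) (f : Fin m → ι) (i : Fin m) =>
        if f i = x then σf f i c * dist (x : X) c else 0)]
    simp [fun (f : Fin m → ι) (i : Fin m) (c : X) =>
      Finset.sum_ite_eq Finset.univ (f i) (fun a : ι => σf f i c * dist (a : X) c)]
  -- assemble
  have hmem : (∑ x : ι, ∑ c ∈ C, (fun x c => τ x c / K) x c * dist ((x:ι) : X) c) ∈
      { t : ℝ | ∃ σ : ι → X → ℝ, (∀ i c, 0 ≤ σ i c) ∧
        (∀ c ∈ C, ∑ i : ι, σ i c = Γ c) ∧ (∀ i : ι, ∑ c ∈ C, σ i c = (1:ℝ)) ∧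
        t = ∑ i : ι, ∑ c ∈ C, σ i c * dist ((i : ι) : X) c } := by
    refine ⟨fun x c => τ x c / K, ?_, ?_, ?_, rfl⟩
    · intro x c
      refine div_nonneg ?_ hK0.le
      refine Finset.sum_nonneg fun f _ => Finset.sum_nonneg fun i _ => ?_
      by_cases h : f i = x
      · simp [h, hσ0 f i c]
      · simp [h]
    · intro c hc
      rw [← Finset.sum_div, h1 c hc, mul_div_cancel_left₀ _ hK0.ne']
    · intro x
      rw [← Finset.sum_div, h2 x, div_self hK0.ne']
  have hle := csInf_le (cost_set_bddBelow (fun x : ι => (x : X)) (fun _ => (1:ℝ)) C Γ) hmem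
  have hval : (∑ x : ι, ∑ c ∈ C, (fun x c => τ x c / K) x c * dist ((x:ι) : X) c) =
      (∑ f : Fin m → ι, ∑ i, ∑ c ∈ C, σf f i c * dist (↑(f i) : X) c) / K := by
    simp only [div_mul_eq_mul_div, ← Finset.sum_div]
    rw [h3]
  rw [hval] at hle
  refine le_trans hle ?_
  have hsum_le : (∑ f : Fin m → ι, ∑ i, ∑ c ∈ C, σf f i c * dist (↑(f i) : X) c) ≤
      ∑ f : Fin m → ι,
        (assignCost (fun i : Fin m => ((f i : X))) (fun _ => N / (m : ℝ)) C Γ + ε) :=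
    Finset.sum_le_sum fun f _ => (hσcost f).le
  calc (∑ f : Fin m → ι, ∑ i, ∑ c ∈ C, σf f i c * dist (↑(f i) : X) c) / K
      ≤ (∑ f : Fin m → ι,
          (assignCost (fun i : Fin m => ((f i : X))) (fun _ => N / (m : ℝ)) C Γ + ε)) / K :=
        (div_le_div_iff_of_pos_right hK0).mpr hsum_le
    _ = (∑ f : Fin m → ι,
          assignCost (fun i : Fin m => ((f i : X))) (fun _ => N / (m : ℝ)) C Γ) / K + ε := by
        rw [Finset.sum_add_distrib, Finset.sum_const, Finset.card_univ, nsmul_eq_mul,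
          hcardF, add_div, mul_div_cancel_left₀ _ hK0.ne']
end

section
/- Let T be a finite point set with distinguished point c* and let C be a center set. Define C̃ by moving every center c with d(c,c*) > R_far := 60·diam(T)/ε to c*, let C_far be the moved centers, and let Γ̃ be the induced capacity constraint (capacities of moved centers aggregated at c*). Then for every assignment σ consistent with Γ: cost^σ(T, C̃, Γ̃) + (1 − ε/20)·Σ_{c∈C_far} Γ(c)·d(c,c*) ≤ cost^σ(T, C, Γ) ≤ cost^σ(T, C̃, Γ̃) + Σ_{c∈C_far} Γ(c)·d(c,c*). -/
open Classical in
/-- Moving far centers to `c*`: moving every center at distance more than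
`R_far = 60·diam(T)/ε` from `c*` to `c*` changes the cost of any assignment `σ`
consistent with `Γ` by between `(1 − ε/20)·Σ_{c far} Γ(c)·d(c,c*)` and
`Σ_{c far} Γ(c)·d(c,c*)`. -/
theorem far_center_movement {X : Type*} [MetricSpace X]
    (T C : Finset X) (cstar : X)
    (ε : ℝ) (hε0 : 0 < ε) (hε1 : ε < 1)
    (hTd : ∀ x ∈ T, dist x cstar ≤ Metric.diam (↑T : Set X))
    (Γ : X → ℝ) (hΓ0 : ∀ c ∈ C, 0 ≤ Γ c) (hΓtot : ∑ c ∈ C, Γ c = (T.card : ℝ))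
    (σ : X → X → ℝ) (hσ0 : ∀ x c, 0 ≤ σ x c)
    (hσΓ : ∀ c ∈ C, ∑ x ∈ T, σ x c = Γ c)
    (hσrow : ∀ x ∈ T, ∑ c ∈ C, σ x c = 1) :
    let Rfar : ℝ := 60 * Metric.diam (↑T : Set X) / ε
    let Cfar : Finset X := C.filter (fun c => Rfar < dist c cstar)
    let costMoved : ℝ :=
      ∑ x ∈ T, ∑ c ∈ C, σ x c * dist x (if Rfar < dist c cstar then cstar else c)
    costMoved + (1 - ε / 20) * ∑ c ∈ Cfar, Γ c * dist c cstar ≤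
        ∑ x ∈ T, ∑ c ∈ C, σ x c * dist x c ∧
      ∑ x ∈ T, ∑ c ∈ C, σ x c * dist x c ≤
        costMoved + ∑ c ∈ Cfar, Γ c * dist c cstar := by
  intro Rfar Cfar costMoved
  have hdiam : (0:ℝ) ≤ Metric.diam (↑T : Set X) := Metric.diam_nonneg
  -- the difference of the two costs
  have key : (∑ x ∈ T, ∑ c ∈ C, σ x c * dist x c) - costMoved
      = ∑ c ∈ Cfar, ∑ x ∈ T, σ x c * (dist x c - dist x cstar) := by
    have : (∑ x ∈ T, ∑ c ∈ C, σ x c * dist x c) - costMoved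
        = ∑ c ∈ C, ∑ x ∈ T,
            σ x c * (dist x c - dist x (if Rfar < dist c cstar then cstar else c)) := by
      simp only [costMoved, ← Finset.sum_sub_distrib, mul_sub]
      rw [Finset.sum_comm]
    rw [this, ← Finset.sum_filter_add_sum_filter_not C (fun c => Rfar < dist c cstar)
      (fun c => ∑ x ∈ T, σ x c * (dist x c - dist x (if Rfar < dist c cstar then cstar else c)))]
    have hz : ∑ c ∈ C.filter (fun c => ¬ Rfar < dist c cstar), ∑ x ∈ T,
        σ x c * (dist x c - dist x (if Rfar < dist c cstar then cstar else c)) = 0 :=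
      Finset.sum_eq_zero fun c hc => by
        simp [if_neg (Finset.mem_filter.mp hc).2]
    rw [hz, add_zero]
    exact Finset.sum_congr rfl fun c hc => by
      simp [if_pos (Finset.mem_filter.mp hc).2]
  have hup : ∑ c ∈ Cfar, ∑ x ∈ T, σ x c * (dist x c - dist x cstar)
      ≤ ∑ c ∈ Cfar, Γ c * dist c cstar := by
    refine Finset.sum_le_sum fun c hc => ?_
    have hcC : c ∈ C := (Finset.mem_filter.mp hc).1
    rw [← hσΓ c hcC, Finset.sum_mul]
    refine Finset.sum_le_sum fun x hx => ?_
    refine mul_le_mul_of_nonneg_left ?_ (hσ0 x c)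
    have := dist_triangle x cstar c
    rw [dist_comm cstar c] at this
    linarith
  have hlow : (1 - ε / 20) * ∑ c ∈ Cfar, Γ c * dist c cstar
      ≤ ∑ c ∈ Cfar, ∑ x ∈ T, σ x c * (dist x c - dist x cstar) := by
    rw [Finset.mul_sum]
    refine Finset.sum_le_sum fun c hc => ?_
    have hcC : c ∈ C := (Finset.mem_filter.mp hc).1
    have hcf : Rfar < dist c cstar := (Finset.mem_filter.mp hc).2
    have hd0 : 0 < dist c cstar := lt_of_le_of_lt (by positivity) hcf
    have hdiamle : Metric.diam (↑T : Set X) ≤ ε / 60 * dist c cstar := by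
      have h60 : 60 * Metric.diam (↑T : Set X) < ε * dist c cstar := by
        have := (div_lt_iff₀ hε0).mp hcf
        linarith
      linarith
    rw [← hσΓ c hcC, Finset.sum_mul, Finset.mul_sum]
    refine Finset.sum_le_sum fun x hx => ?_
    have htri := dist_triangle c x cstar
    rw [dist_comm c x] at htri
    have hxd : dist x cstar ≤ ε / 60 * dist c cstar := (hTd x hx).trans hdiamle
    have hterm : (1 - ε / 20) * dist c cstar ≤ dist x c - dist x cstar := by
      nlinarith [hd0.le, hε0.le]
    calc (1 - ε / 20) * (σ x c * dist c cstar)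
        = σ x c * ((1 - ε / 20) * dist c cstar) := by ring
      _ ≤ σ x c * (dist x c - dist x cstar) :=
          mul_le_mul_of_nonneg_left hterm (hσ0 x c)
  refine ⟨by linarith, by linarith⟩
end

section
/- Let Γ, Γ' : C → ℝ≥0 be two capacity constraints on a center set C of size k with Γ(C) = Γ'(C) and |Γ(c) − Γ'(c)| < 1/M for every c, where M = ⌈600k/ε⌉, and suppose all pairwise distances among centers are at most D. Then for any finite weighted point set T contained within distance D of the centers, |cost(T,C,Γ) − cost(T,C,Γ')| ≤ k·D/M. -/
/-- The feasible-cost set of the assignment problem. -/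
def FSet {X : Type*} [MetricSpace X] {ι : Type*} [Fintype ι]
    (pt : ι → X) (w : ι → ℝ) (C : Finset X) (Γ : X → ℝ) : Set ℝ :=
  { t : ℝ | ∃ σ : ι → X → ℝ, (∀ i c, 0 ≤ σ i c) ∧
    (∀ c ∈ C, ∑ i : ι, σ i c = Γ c) ∧ (∀ i : ι, ∑ c ∈ C, σ i c = w i) ∧
    t = ∑ i : ι, ∑ c ∈ C, σ i c * dist (pt i) c }

lemma assignCost_eq {X : Type*} [MetricSpace X] {ι : Type*} [Fintype ι]
    (pt : ι → X) (w : ι → ℝ) (C : Finset X) (Γ : X → ℝ) :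
    assignCost pt w C Γ = sInf (FSet pt w C Γ) := rfl

lemma FSet_nonneg {X : Type*} [MetricSpace X] {ι : Type*} [Fintype ι]
    (pt : ι → X) (w : ι → ℝ) (C : Finset X) (Γ : X → ℝ) :
    ∀ t ∈ FSet pt w C Γ, (0:ℝ) ≤ t := by
  rintro t ⟨σ, h0, -, -, rfl⟩
  exact Finset.sum_nonneg fun i _ => Finset.sum_nonneg fun c _ =>
    mul_nonneg (h0 i c) dist_nonneg

lemma FSet_bddBelow {X : Type*} [MetricSpace X] {ι : Type*} [Fintype ι]
    (pt : ι → X) (w : ι → ℝ) (C : Finset X) (Γ : X → ℝ) :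
    BddBelow (FSet pt w C Γ) := ⟨0, fun t ht => FSet_nonneg pt w C Γ t ht⟩

lemma FSet_nonempty {X : Type*} [MetricSpace X] {ι : Type*} [Fintype ι]
    (pt : ι → X) (w : ι → ℝ) (C : Finset X) (Γ : X → ℝ)
    (hΓ0 : ∀ c ∈ C, 0 ≤ Γ c) (hw : ∀ i, 0 ≤ w i)
    (hmass : ∑ c ∈ C, Γ c = ∑ i : ι, w i) :
    (FSet pt w C Γ).Nonempty := by
  classical
  by_cases hW0 : ∑ i : ι, w i = 0
  · have hwz : ∀ i, w i = 0 := by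
      intro i
      have := (Finset.sum_eq_zero_iff_of_nonneg (fun i _ => hw i)).1 hW0
      exact this i (Finset.mem_univ i)
    have hΓz : ∀ c ∈ C, Γ c = 0 := by
      have : ∑ c ∈ C, Γ c = 0 := by rw [hmass, hW0]
      exact (Finset.sum_eq_zero_iff_of_nonneg hΓ0).1 this
    refine ⟨0, fun _ _ => 0, fun _ _ => le_refl 0, ?_, ?_, ?_⟩
    · intro c hc; simpa using (hΓz c hc).symm
    · intro i; simpa using (hwz i).symm
    · simp
  · have hWpos : 0 < ∑ i : ι, w i :=
      lt_of_le_of_ne (Finset.sum_nonneg fun i _ => hw i) (Ne.symm hW0)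
    refine ⟨_, fun i c => if c ∈ C then w i * Γ c / (∑ j : ι, w j) else 0,
      ?_, ?_, ?_, rfl⟩
    · intro i c
      by_cases hc : c ∈ C
      · simp only [if_pos hc]
        exact div_nonneg (mul_nonneg (hw i) (hΓ0 c hc)) hWpos.le
      · simp [hc]
    · intro c hc
      simp only [if_pos hc]
      rw [← Finset.sum_div, ← Finset.sum_mul]
      field_simp
    · intro i
      have h1 : ∀ c ∈ C, (if c ∈ C then w i * Γ c / (∑ j : ι, w j) else 0)
          = w i * Γ c / (∑ j : ι, w j) := fun c hc => if_pos hc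
      rw [Finset.sum_congr rfl h1, ← Finset.sum_div, ← Finset.mul_sum, hmass]
      field_simp

/-- Key rerouting lemma: any feasible cost for `Γ` yields a feasible cost for `Γ'`
that is larger by at most `|C| * E * D`. -/
lemma FSet_shift {X : Type*} [MetricSpace X] {ι : Type*} [Fintype ι]
    (pt : ι → X) (w : ι → ℝ) (C : Finset X) (Γ Γ' : X → ℝ)
    (hΓ'0 : ∀ c ∈ C, 0 ≤ Γ' c)
    (htot : ∑ c ∈ C, Γ c = ∑ c ∈ C, Γ' c)
    (E D : ℝ) (hE : ∀ c ∈ C, Γ c - Γ' c ≤ E) (hE0 : 0 ≤ E)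
    (hD0 : 0 ≤ D) (hD : ∀ c ∈ C, ∀ c' ∈ C, dist c c' ≤ D)
    (t : ℝ) (ht : t ∈ FSet pt w C Γ) :
    ∃ t' ∈ FSet pt w C Γ', t' ≤ t + (C.card : ℝ) * E * D := by
  classical
  obtain ⟨σ, hσ0, hcol, hrow, rfl⟩ := ht
  set t : ℝ := ∑ i : ι, ∑ c ∈ C, σ i c * dist (pt i) c with htdef
  set sur : X → ℝ := fun c => if c ∈ C then max (Γ c - Γ' c) 0 else 0 with hsurdef
  set dfc : X → ℝ := fun c => if c ∈ C then max (Γ' c - Γ c) 0 else 0 with hdfcdef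
  have hsur0 : ∀ c, 0 ≤ sur c := by
    intro c; by_cases hc : c ∈ C <;> simp [hsurdef, hc]
  have hdfc0 : ∀ c, 0 ≤ dfc c := by
    intro c; by_cases hc : c ∈ C <;> simp [hdfcdef, hc]
  have key : ∀ c ∈ C, dfc c - sur c = Γ' c - Γ c := by
    intro c hc
    simp only [hsurdef, hdfcdef, if_pos hc]
    rcases le_total (Γ c) (Γ' c) with h | h
    · rw [max_eq_left (by linarith), max_eq_right (by linarith)]; ring
    · rw [max_eq_right (by linarith), max_eq_left (by linarith)]; ring
  set S : ℝ := ∑ c ∈ C, sur c with hSdef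
  have hS0 : 0 ≤ S := Finset.sum_nonneg fun c _ => hsur0 c
  have hsd : ∑ c ∈ C, dfc c = S := by
    have h1 : ∑ c ∈ C, (dfc c - sur c) = 0 := by
      rw [Finset.sum_congr rfl key, Finset.sum_sub_distrib]
      rw [htot]; ring
    rw [Finset.sum_sub_distrib] at h1
    rw [hSdef]; linarith
  have hΓpos : ∀ c ∈ C, 0 ≤ Γ c := by
    intro c hc
    rw [← hcol c hc]
    exact Finset.sum_nonneg fun i _ => hσ0 i c
  have hsurleΓ : ∀ c ∈ C, sur c ≤ Γ c := by
    intro c hc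
    simp only [hsurdef, if_pos hc]
    exact max_le (by linarith [hΓ'0 c hc]) (hΓpos c hc)
  have hsurleE : ∀ c ∈ C, sur c ≤ E := by
    intro c hc
    simp only [hsurdef, if_pos hc]
    exact max_le (hE c hc) hE0
  have hkED : 0 ≤ (C.card : ℝ) * E * D := by positivity
  have hSle : S ≤ (C.card : ℝ) * E := by
    calc S ≤ ∑ _c ∈ C, E := Finset.sum_le_sum fun c hc => hsurleE c hc
    _ = (C.card : ℝ) * E := by rw [Finset.sum_const, nsmul_eq_mul]
  by_cases hS : S = 0
  · -- then Γ = Γ' on C and σ itself works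
    have hz : ∀ c ∈ C, sur c = 0 :=
      (Finset.sum_eq_zero_iff_of_nonneg (fun c _ => hsur0 c)).1 hS
    have hle : ∀ c ∈ C, Γ c ≤ Γ' c := by
      intro c hc
      have h1 := hz c hc
      simp only [hsurdef, if_pos hc] at h1
      have := le_max_left (Γ c - Γ' c) (0:ℝ)
      linarith [this.trans_eq h1]
    have heq : ∀ c ∈ C, Γ c = Γ' c :=
      (Finset.sum_eq_sum_iff_of_le hle).1 htot
    exact ⟨t, ⟨σ, hσ0, fun c hc => (hcol c hc).trans (heq c hc), hrow, rfl⟩,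
      by linarith⟩
  · have hSpos : 0 < S := lt_of_le_of_ne hS0 (Ne.symm hS)
    set r : ι → X → ℝ := fun i c => if Γ c = 0 then 0 else σ i c * (sur c / Γ c)
      with hrdef
    have hrC : ∀ i c, c ∉ C → r i c = 0 := by
      intro i c hc
      simp [hrdef, hsurdef, hc]
    have hr0 : ∀ i c, 0 ≤ r i c := by
      intro i c
      by_cases hc : c ∈ C
      · by_cases h1 : Γ c = 0
        · simp [hrdef, h1]
        · have hpos : 0 < Γ c := lt_of_le_of_ne (hΓpos c hc) (Ne.symm h1)
          simp only [hrdef, if_neg h1]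
          exact mul_nonneg (hσ0 i c) (div_nonneg (hsur0 c) hpos.le)
      · rw [hrC i c hc]
    have hrle : ∀ i c, r i c ≤ σ i c := by
      intro i c
      by_cases hc : c ∈ C
      · by_cases h1 : Γ c = 0
        · simp [hrdef, h1, hσ0 i c]
        · have hpos : 0 < Γ c := lt_of_le_of_ne (hΓpos c hc) (Ne.symm h1)
          simp only [hrdef, if_neg h1]
          calc σ i c * (sur c / Γ c) ≤ σ i c * 1 := by
                exact mul_le_mul_of_nonneg_left
                  ((div_le_one hpos).2 (hsurleΓ c hc)) (hσ0 i c)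
          _ = σ i c := mul_one _
      · rw [hrC i c hc]; exact hσ0 i c
    have hrsum : ∀ c ∈ C, ∑ i : ι, r i c = sur c := by
      intro c hc
      by_cases h1 : Γ c = 0
      · have hz : sur c = 0 := le_antisymm (by linarith [hsurleΓ c hc, h1.le]) (hsur0 c)
        simp [hrdef, h1, hz]
      · simp only [hrdef, if_neg h1]
        rw [← Finset.sum_mul, hcol c hc, mul_comm, div_mul_cancel₀ _ h1]
    set R : ι → ℝ := fun i => ∑ c ∈ C, r i c with hRdef
    have hR0 : ∀ i, 0 ≤ R i := fun i => Finset.sum_nonneg fun c _ => hr0 i c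
    have hRtot : ∑ i : ι, R i = S := by
      rw [hRdef]
      simp only
      rw [Finset.sum_comm, hSdef]
      exact Finset.sum_congr rfl hrsum
    set σ' : ι → X → ℝ := fun i c => σ i c - r i c + R i * (dfc c / S) with hσ'def
    refine ⟨∑ i : ι, ∑ c ∈ C, σ' i c * dist (pt i) c, ⟨σ', ?_, ?_, ?_, rfl⟩, ?_⟩
    · intro i c
      have h1 : 0 ≤ σ i c - r i c := sub_nonneg.2 (hrle i c)
      have h2 : 0 ≤ R i * (dfc c / S) :=
        mul_nonneg (hR0 i) (div_nonneg (hdfc0 c) hS0)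
      simp only [hσ'def]; linarith
    · intro c hc
      simp only [hσ'def]
      rw [Finset.sum_add_distrib, Finset.sum_sub_distrib, hcol c hc, hrsum c hc,
        ← Finset.sum_mul, hRtot, mul_comm, div_mul_cancel₀ _ hS]
      linarith [key c hc]
    · intro i
      simp only [hσ'def]
      rw [Finset.sum_add_distrib, Finset.sum_sub_distrib, hrow i]
      have hRi : ∑ c ∈ C, r i c = R i := rfl
      have h2 : ∑ c ∈ C, R i * (dfc c / S) = R i := by
        rw [← Finset.mul_sum, ← Finset.sum_div, hsd, div_self hS, mul_one]
      rw [hRi, h2]; ring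
    · -- cost bound
      have hd : ∀ (i : ι), ∀ c ∈ C, ∀ c'' ∈ C,
          dist (pt i) c ≤ dist (pt i) c'' + D := by
        intro i c hc c'' hc''
        calc dist (pt i) c ≤ dist (pt i) c'' + dist c'' c := dist_triangle _ _ _
        _ ≤ dist (pt i) c'' + D := by linarith [hD c'' hc'' c hc]
      set A : ℝ := ∑ i : ι, ∑ c ∈ C, r i c * dist (pt i) c with hAdef
      have hsplit : ∑ i : ι, ∑ c ∈ C, σ' i c * dist (pt i) c
          = (t - A) + ∑ i : ι, ∑ c ∈ C, R i * (dfc c / S) * dist (pt i) c := by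
        rw [htdef, hAdef, ← Finset.sum_sub_distrib, ← Finset.sum_add_distrib]
        refine Finset.sum_congr rfl fun i _ => ?_
        rw [← Finset.sum_sub_distrib, ← Finset.sum_add_distrib]
        refine Finset.sum_congr rfl fun c _ => ?_
        simp only [hσ'def]
        ring
      have hinner : ∀ c ∈ C, ∑ i : ι, R i * dist (pt i) c ≤ A + S * D := by
        intro c hc
        have hstep : ∀ i : ι, R i * dist (pt i) c
            ≤ (∑ c'' ∈ C, r i c'' * dist (pt i) c'') + R i * D := by
          intro i
          calc R i * dist (pt i) c = ∑ c'' ∈ C, r i c'' * dist (pt i) c := by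
                have hRi : R i = ∑ c'' ∈ C, r i c'' := rfl
                rw [hRi, Finset.sum_mul]
          _ ≤ ∑ c'' ∈ C, (r i c'' * dist (pt i) c'' + r i c'' * D) := by
                refine Finset.sum_le_sum fun c'' hc'' => ?_
                have h1 := hd i c hc c'' hc''
                have h2 := hr0 i c''
                nlinarith
          _ = (∑ c'' ∈ C, r i c'' * dist (pt i) c'') + R i * D := by
                rw [Finset.sum_add_distrib, ← Finset.sum_mul]
        calc ∑ i : ι, R i * dist (pt i) c
            ≤ ∑ i : ι, ((∑ c'' ∈ C, r i c'' * dist (pt i) c'') + R i * D) :=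
              Finset.sum_le_sum fun i _ => hstep i
        _ = A + S * D := by
              rw [Finset.sum_add_distrib, ← Finset.sum_mul, hRtot, hAdef]
      have hB : ∑ i : ι, ∑ c ∈ C, R i * (dfc c / S) * dist (pt i) c
          ≤ A + S * D := by
        rw [Finset.sum_comm]
        have h1 : ∀ c ∈ C, ∑ i : ι, R i * (dfc c / S) * dist (pt i) c
            = (dfc c / S) * ∑ i : ι, R i * dist (pt i) c := by
          intro c hc
          rw [Finset.mul_sum]
          exact Finset.sum_congr rfl fun i _ => by ring
        calc ∑ c ∈ C, ∑ i : ι, R i * (dfc c / S) * dist (pt i) c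
            = ∑ c ∈ C, (dfc c / S) * ∑ i : ι, R i * dist (pt i) c :=
              Finset.sum_congr rfl h1
        _ ≤ ∑ c ∈ C, (dfc c / S) * (A + S * D) := by
              refine Finset.sum_le_sum fun c hc => ?_
              exact mul_le_mul_of_nonneg_left (hinner c hc)
                (div_nonneg (hdfc0 c) hS0)
        _ = (∑ c ∈ C, dfc c) / S * (A + S * D) := by
              rw [← Finset.sum_mul, ← Finset.sum_div]
        _ = A + S * D := by rw [hsd, div_self hS, one_mul]
      have hSD : S * D ≤ (C.card : ℝ) * E * D := mul_le_mul_of_nonneg_right hSle hD0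
      rw [hsplit]
      linarith
lemma csInf_le_csInf_add {S S' : Set ℝ} {δ : ℝ} (hne : S.Nonempty)
    (hbdd : BddBelow S') (h : ∀ t ∈ S, ∃ t' ∈ S', t' ≤ t + δ) :
    sInf S' ≤ sInf S + δ := by
  have h1 : ∀ t ∈ S, sInf S' - δ ≤ t := by
    intro t ht
    obtain ⟨t', ht', hle⟩ := h t ht
    have := csInf_le hbdd ht'
    linarith
  have := le_csInf hne h1
  linarith

/-- Capacity rounding: if `Γ` and `Γ'` have the same total, agree within `1/M` on each
of the `k` centers (with `M = ⌈600k/ε⌉`), and all pairwise distances among the centers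
are at most `D`, then the optimal constrained assignment costs differ by at most `kD/M`. -/
theorem capacity_rounding {X : Type*} [MetricSpace X]
    (T C : Finset X) (w : X → ℝ) (hw : ∀ x ∈ T, 0 ≤ w x)
    (Γ Γ' : X → ℝ) (hΓ0 : ∀ c ∈ C, 0 ≤ Γ c) (hΓ'0 : ∀ c ∈ C, 0 ≤ Γ' c)
    (htot : ∑ c ∈ C, Γ c = ∑ c ∈ C, Γ' c)
    (hmass : ∑ c ∈ C, Γ c = ∑ x ∈ T, w x)
    (k M : ℕ) (hk : k = C.card) (ε : ℝ) (hε : 0 < ε)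
    (hM : (M : ℝ) = (⌈600 * (k : ℝ) / ε⌉₊ : ℝ))
    (D : ℝ) (hD : ∀ c ∈ C, ∀ c' ∈ C, dist c c' ≤ D)
    (hclose : ∀ c ∈ C, |Γ c - Γ' c| < 1 / (M : ℝ)) :
    |assignCost (fun x : {x // x ∈ T} => (x : X)) (fun x => w x) C Γ -
      assignCost (fun x : {x // x ∈ T} => (x : X)) (fun x => w x) C Γ'| ≤
      (k : ℝ) * D / (M : ℝ) := by
  set pt : {x // x ∈ T} → X := fun x => (x : X) with hpt
  set w' : {x // x ∈ T} → ℝ := fun x => w x with hw'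
  have hw'0 : ∀ i, 0 ≤ w' i := fun i => hw i i.2
  have hsumw : ∑ x ∈ T, w x = ∑ i : {x // x ∈ T}, w' i :=
    (Finset.sum_coe_sort T w).symm
  rcases C.eq_empty_or_nonempty with hC | hC
  · -- empty center set: both costs are 0 and k = 0
    subst hC
    have hk0 : k = 0 := by simpa using hk
    have hwz : ∀ i : {x // x ∈ T}, w' i = 0 := by
      have h0 : ∑ i : {x // x ∈ T}, w' i = 0 := by
        rw [← hsumw, ← hmass]; simp
      intro i
      exact (Finset.sum_eq_zero_iff_of_nonneg (fun i _ => hw'0 i)).1 h0 i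
        (Finset.mem_univ i)
    have hset : ∀ Γ₀ : X → ℝ, FSet pt w' (∅ : Finset X) Γ₀ = {0} := by
      intro Γ₀
      ext t
      constructor
      · rintro ⟨σ, -, -, -, rfl⟩; simp
      · rintro rfl
        exact ⟨fun _ _ => 0, fun _ _ => le_refl 0, by simp, by
          intro i; simpa using (hwz i).symm, by simp⟩
    rw [assignCost_eq, assignCost_eq, hset Γ, hset Γ', csInf_singleton, hk0]
    simp
  · -- main case
    have hk1 : 1 ≤ k := by
      rw [hk]; exact Finset.card_pos.2 hC
    have hM1 : (1:ℝ) ≤ (M : ℝ) := by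
      rw [hM]
      have : 0 < ⌈600 * (k : ℝ) / ε⌉₊ := by
        rw [Nat.ceil_pos]
        have hkpos : (0:ℝ) < (k:ℝ) := by exact_mod_cast hk1
        positivity
      exact_mod_cast this
    have hMpos : (0:ℝ) < (M : ℝ) := by linarith
    have hD0 : 0 ≤ D := by
      obtain ⟨c, hc⟩ := hC
      have := hD c hc c hc
      simpa using this
    have hE0 : (0:ℝ) ≤ 1 / (M:ℝ) := by positivity
    have hmass' : ∑ c ∈ C, Γ c = ∑ i : {x // x ∈ T}, w' i := by
      rw [hmass, hsumw]
    have hmass'' : ∑ c ∈ C, Γ' c = ∑ i : {x // x ∈ T}, w' i := by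
      rw [← htot, hmass']
    have hne : (FSet pt w' C Γ).Nonempty :=
      FSet_nonempty pt w' C Γ hΓ0 hw'0 hmass'
    have hne' : (FSet pt w' C Γ').Nonempty :=
      FSet_nonempty pt w' C Γ' hΓ'0 hw'0 hmass''
    have hbdd : BddBelow (FSet pt w' C Γ) := FSet_bddBelow pt w' C Γ
    have hbdd' : BddBelow (FSet pt w' C Γ') := FSet_bddBelow pt w' C Γ'
    have hshift1 : ∀ t ∈ FSet pt w' C Γ, ∃ t' ∈ FSet pt w' C Γ',
        t' ≤ t + (C.card : ℝ) * (1 / (M:ℝ)) * D := by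
      intro t ht
      exact FSet_shift pt w' C Γ Γ' hΓ'0 htot (1 / (M:ℝ)) D
        (fun c hc => le_of_lt (lt_of_le_of_lt (le_abs_self _) (hclose c hc)))
        hE0 hD0 hD t ht
    have hshift2 : ∀ t ∈ FSet pt w' C Γ', ∃ t' ∈ FSet pt w' C Γ,
        t' ≤ t + (C.card : ℝ) * (1 / (M:ℝ)) * D := by
      intro t ht
      refine FSet_shift pt w' C Γ' Γ hΓ0 htot.symm (1 / (M:ℝ)) D
        (fun c hc => ?_) hE0 hD0 hD t ht
      have := hclose c hc
      rw [abs_sub_comm] at this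
      exact le_of_lt (lt_of_le_of_lt (le_abs_self _) this)
    have h1 : sInf (FSet pt w' C Γ') ≤ sInf (FSet pt w' C Γ)
        + (C.card : ℝ) * (1 / (M:ℝ)) * D :=
      csInf_le_csInf_add hne hbdd' hshift1
    have h2 : sInf (FSet pt w' C Γ) ≤ sInf (FSet pt w' C Γ')
        + (C.card : ℝ) * (1 / (M:ℝ)) * D :=
      csInf_le_csInf_add hne' hbdd hshift2
    have hcard : (C.card : ℝ) = (k : ℝ) := by exact_mod_cast hk.symm
    have heq : (C.card : ℝ) * (1 / (M:ℝ)) * D = (k : ℝ) * D / (M : ℝ) := by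
      rw [hcard]; ring
    rw [assignCost_eq, assignCost_eq, abs_le]
    constructor <;> [linarith [h2, heq.symm ▸ h2]; skip]
    · rw [← heq]; linarith
end
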